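/- For integers t with 0 ≤ t ≤ floor(n/q), the following identity holds: the sum over i from t to floor(n/q) of C(i,t)*a(n,i) equals (n-(q-1)t)!/t!. -/

import Mathlib

open Finset

/-- `a` with `a+1`, ..., `a+q-1` (0-indexed) form an adjacent `q`-cycle of `π`. -/
def isAdjCycle (q : ℕ) {n : ℕ} (π : Equiv.Perm (Fin n)) (a : ℕ) : Prop :=
  a + q ≤ n ∧ ∀ i : Fin n, a ≤ i.val → i.val < a + q →
    (π i).val = if i.val = a + q - 1 then a else i.val + 1

instance (q n : ℕ) (π : Equiv.Perm (Fin n)) (a : ℕ) : Decidable (isAdjCycle q π a) := by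
  unfold isAdjCycle; infer_instance

/-- The number of adjacent `q`-cycles of a permutation of `{1,...,n}`. -/
def adjCycleCount (q : ℕ) {n : ℕ} (π : Equiv.Perm (Fin n)) : ℕ :=
  ((Finset.range n).filter (isAdjCycle q π)).card

/-- `numAqC q n k` = number of permutations of `{1,...,n}` with exactly `k` adjacent `q`-cycles. -/
def numAqC (q n k : ℕ) : ℕ :=
  (Finset.univ.filter (fun π : Equiv.Perm (Fin n) => adjCycleCount q π = k)).card

/-!
Count pairs `(π, S)` where `S` is a `t`-set of starting points of adjacent `q`-cycles of `π`.
Grouping by `π` gives `∑ i, C(i, t) a(n, i)`. Grouping by `S`: the blocks `[a, a + q)`,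
`a ∈ S`, must be pairwise disjoint, `π` is then prescribed on their union and arbitrary on the
remaining `n - q t` points, giving `(n - q t)!` permutations; and there are
`C(n - (q - 1) t, t)` ways to place `t` disjoint blocks of length `q` in `[0, n)` (induct on
`n`, according to whether the last possible block `[n - q, n)` is used).
Finally `C(m, t) (m - t)! = m! / t!`.
-/

open Equiv
open scoped Nat

/-- `S` is the set of left endpoints of pairwise disjoint blocks `[a, a + q)` inside `[0, n)`. -/
def IsBlockPacking (q n : ℕ) (S : Finset ℕ) : Prop :=
  (∀ a ∈ S, a + q ≤ n) ∧ ∀ a ∈ S, ∀ b ∈ S, a < b → a + q ≤ b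

instance (q n : ℕ) : DecidablePred (IsBlockPacking q n) := fun _ => by
  unfold IsBlockPacking; infer_instance

def blockCover (q : ℕ) (S : Finset ℕ) : Finset ℕ := S.biUnion fun a => Ico a (a + q)

def blockPackings (q n t : ℕ) : Finset (Finset ℕ) :=
  {S ∈ powersetCard t (range n) | IsBlockPacking q n S}

section Packings

variable {q n t x : ℕ} {S T : Finset ℕ}

lemma mem_blockCover : x ∈ blockCover q S ↔ ∃ a ∈ S, a ≤ x ∧ x < a + q := by
  simp [blockCover]

lemma IsBlockPacking.mono (h : IsBlockPacking q n T) (hST : S ⊆ T) : IsBlockPacking q n S :=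
  ⟨fun a ha => h.1 a (hST ha), fun a ha b hb => h.2 a (hST ha) b (hST hb)⟩

lemma IsBlockPacking.eq_of_mem_block (h : IsBlockPacking q n S) {a b : ℕ} (ha : a ∈ S)
    (hb : b ∈ S) (hxa : a ≤ x ∧ x < a + q) (hxb : b ≤ x ∧ x < b + q) : a = b := by
  rcases lt_trichotomy a b with hab | rfl | hab
  · have := h.2 a ha b hb hab; omega
  · rfl
  · have := h.2 b hb a ha hab; omega

lemma IsBlockPacking.blockCover_subset_range (h : IsBlockPacking q n S) :
    blockCover q S ⊆ range n := by
  intro x hx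
  obtain ⟨a, ha, -, hxa⟩ := mem_blockCover.1 hx
  have := h.1 a ha
  exact mem_range.2 (by omega)

lemma IsBlockPacking.subset_range (hq : 1 ≤ q) (h : IsBlockPacking q n S) : S ⊆ range n :=
  fun a ha => h.blockCover_subset_range (mem_blockCover.2 ⟨a, ha, le_rfl, by omega⟩)

lemma IsBlockPacking.card_blockCover (h : IsBlockPacking q n S) : #(blockCover q S) = q * #S := by
  rw [blockCover, card_biUnion, sum_congr rfl fun a _ => Nat.card_Ico a (a + q)]
  · simp [mul_comm]
  · intro a ha b hb hab
    refine disjoint_left.2 fun x hxa hxb => hab (h.eq_of_mem_block (x := x) ha hb ?_ ?_)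
    · simpa using hxa
    · simpa using hxb

lemma IsBlockPacking.mul_card_le (h : IsBlockPacking q n S) : q * #S ≤ n := by
  simpa [h.card_blockCover] using card_le_card h.blockCover_subset_range

lemma mem_blockPackings (hq : 1 ≤ q) :
    S ∈ blockPackings q n t ↔ #S = t ∧ IsBlockPacking q n S := by
  simp only [blockPackings, mem_filter, mem_powersetCard]
  exact ⟨fun h => ⟨h.1.2, h.2⟩, fun h => ⟨⟨h.2.subset_range hq, h.1⟩, h.2⟩⟩

lemma isBlockPacking_iff_of_notMem (hqn : q ≤ n) (h : n - q ∉ S) :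
    IsBlockPacking q n S ↔ IsBlockPacking q (n - 1) S := by
  refine ⟨fun hS => ⟨fun a ha => ?_, hS.2⟩, fun hS => ⟨fun a ha => ?_, hS.2⟩⟩
  · have := hS.1 a ha
    have : a ≠ n - q := by rintro rfl; exact h ha
    omega
  · have := hS.1 a ha; omega

lemma isBlockPacking_insert_iff (hq : 1 ≤ q) (hqn : q ≤ n) (hS : n - q ∉ S) :
    IsBlockPacking q n (insert (n - q) S) ↔ IsBlockPacking q (n - q) S := by
  constructor
  · intro h
    refine ⟨fun a ha => ?_, (h.mono (subset_insert _ _)).2⟩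
    have hfit := h.1 a (mem_insert_of_mem ha)
    have : a < n - q := by
      have : a ≠ n - q := by rintro rfl; exact hS ha
      by_contra hge
      have := h.2 (n - q) (mem_insert_self _ _) a (mem_insert_of_mem ha) (by omega)
      omega
    exact h.2 a (mem_insert_of_mem ha) _ (mem_insert_self _ _) this
  · intro h
    refine ⟨fun a ha => ?_, fun a ha b hb hab => ?_⟩
    · rcases mem_insert.1 ha with rfl | ha
      · omega
      · have := h.1 a ha; omega
    · rcases mem_insert.1 ha with rfl | ha <;> rcases mem_insert.1 hb with rfl | hb
      · omega
      · have := h.1 b hb; omega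
      · have := h.1 a ha; omega
      · exact h.2 a ha b hb hab

lemma card_blockPackings_succ (hq : 1 ≤ q) (hqn : q ≤ n) (t : ℕ) :
    #(blockPackings q n (t + 1)) =
      #(blockPackings q (n - 1) (t + 1)) + #(blockPackings q (n - q) t) := by
  rw [← card_filter_add_card_filter_not (p := (n - q ∉ ·))]
  congr 1
  · congr 1
    ext S
    simp only [mem_filter, mem_blockPackings hq]
    constructor
    · rintro ⟨⟨hcard, hS⟩, hnot⟩
      exact ⟨hcard, (isBlockPacking_iff_of_notMem hqn hnot).1 hS⟩
    · rintro ⟨hcard, hS⟩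
      have hnot : n - q ∉ S := fun hmem => by have := hS.1 _ hmem; omega
      exact ⟨⟨hcard, (isBlockPacking_iff_of_notMem hqn hnot).2 hS⟩, hnot⟩
  · symm
    refine card_bij' (fun T _ => insert (n - q) T) (fun S _ => S.erase (n - q)) ?_ ?_ ?_ ?_
    · intro T hT
      rw [mem_blockPackings hq] at hT
      have hnot : n - q ∉ T := fun hmem => by have := hT.2.1 _ hmem; omega
      rw [mem_filter, mem_blockPackings hq, card_insert_of_notMem hnot, hT.1,
        isBlockPacking_insert_iff hq hqn hnot, not_not]
      exact ⟨⟨rfl, hT.2⟩, mem_insert_self _ _⟩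
    · intro S hS
      rw [mem_filter, mem_blockPackings hq, not_not] at hS
      obtain ⟨⟨hcard, hpack⟩, hmem⟩ := hS
      rw [← insert_erase hmem, isBlockPacking_insert_iff hq hqn (notMem_erase _ _)] at hpack
      rw [mem_blockPackings hq, card_erase_of_mem hmem, hcard]
      exact ⟨rfl, hpack⟩
    · intro T hT
      rw [mem_blockPackings hq] at hT
      exact erase_insert fun hmem => by have := hT.2.1 _ hmem; omega
    · intro S hS
      rw [mem_filter, not_not] at hS
      exact insert_erase hS.2

lemma card_blockPackings (hq : 1 ≤ q) (n t : ℕ) :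
    #(blockPackings q n t) = (n - (q - 1) * t).choose t := by
  induction n using Nat.strong_induction_on generalizing t with
  | _ n ih =>
  cases t with
  | zero =>
    have : blockPackings q n 0 = {∅} := by
      ext S
      simp only [mem_blockPackings hq, card_eq_zero, mem_singleton, and_iff_left_iff_imp]
      rintro rfl
      simp [IsBlockPacking]
    simp [this]
  | succ t =>
    by_cases hqn : q ≤ n
    · have hshift : n - q - (q - 1) * t = n - 1 - (q - 1) * (t + 1) := by
        rw [mul_add_one]; omega
      rw [card_blockPackings_succ hq hqn, ih _ (by omega), ih _ (by omega), hshift]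
      obtain hm | hm := Nat.eq_zero_or_pos (n - (q - 1) * (t + 1))
      · have ht : t ≠ 0 := by rintro rfl; omega
        rw [hm, show n - 1 - (q - 1) * (t + 1) = 0 by omega]
        simp [Nat.choose_eq_zero_of_lt (Nat.pos_of_ne_zero ht)]
      · rw [show n - (q - 1) * (t + 1) = n - 1 - (q - 1) * (t + 1) + 1 by omega,
          Nat.choose_succ_succ', add_comm]
    · have hempty : blockPackings q n (t + 1) = ∅ := by
        refine eq_empty_of_forall_notMem fun S hS => ?_
        rw [mem_blockPackings hq] at hS
        obtain ⟨a, ha⟩ := card_pos.1 (by rw [hS.1]; exact t.succ_pos)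
        have := hS.2.1 a ha
        omega
      have : n - (q - 1) * (t + 1) < t + 1 := by
        have : q - 1 ≤ (q - 1) * (t + 1) := Nat.le_mul_of_pos_right _ t.succ_pos
        omega
      rw [hempty, card_empty, Nat.choose_eq_zero_of_lt this]

end Packings

section Permutations

variable {q n a b : ℕ} {S : Finset ℕ} {π : Perm (Fin n)}

lemma isAdjCycle.apply_mem_block (h : isAdjCycle q π a) {x : Fin n}
    (hx : a ≤ x.val ∧ x.val < a + q) : a ≤ (π x).val ∧ (π x).val < a + q := by
  rw [h.2 x hx.1 hx.2]; split_ifs <;> omega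

lemma isAdjCycle.add_le_of_lt (hq : 1 ≤ q) (ha : isAdjCycle q π a) (hb : isAdjCycle q π b)
    (hab : a < b) : a + q ≤ b := by
  by_contra hba
  have hlast : a + q - 1 < n := by have := ha.1; omega
  -- `π` sends the last point of the block at `a` back to `a`, which lies outside the block at `b`
  have hback := ha.2 ⟨a + q - 1, hlast⟩ (by simp; omega) (by simp; omega)
  have hstay :=
    hb.apply_mem_block (x := ⟨a + q - 1, hlast⟩) ⟨by simp; omega, by simp; omega⟩
  rw [if_pos rfl] at hback
  omega

def adjCycleStarts (q : ℕ) (π : Perm (Fin n)) : Finset ℕ := {a ∈ range n | isAdjCycle q π a}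

lemma isBlockPacking_adjCycleStarts (hq : 1 ≤ q) (π : Perm (Fin n)) :
    IsBlockPacking q n (adjCycleStarts q π) :=
  ⟨fun _ ha => (mem_filter.1 ha).2.1,
    fun _ ha _ hb => (mem_filter.1 ha).2.add_le_of_lt hq (mem_filter.1 hb).2⟩

lemma adjCycleCount_le_div (hq : 1 ≤ q) (π : Perm (Fin n)) : adjCycleCount q π ≤ n / q :=
  (Nat.le_div_iff_mul_le hq).2 <| by
    rw [mul_comm]; exact (isBlockPacking_adjCycleStarts hq π).mul_card_le

lemma exists_isAdjCycle_of_add_le (hq : 1 ≤ q) (h : a + q ≤ n) :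
    ∃ r : Perm (Fin n), isAdjCycle q r a ∧
      ∀ x : Fin n, ¬ (a ≤ x.val ∧ x.val < a + q) → r x = x := by
  have : NeZero n := ⟨by omega⟩
  refine ⟨Fin.cycleIcc ⟨a, by omega⟩ ⟨a + q - 1, by omega⟩, ⟨h, fun x hax hxa => ?_⟩,
    fun x hx => ?_⟩
  · rw [Fin.cycleIcc_of_le_of_le (Fin.mk_le_of_le_val hax) (Fin.le_def.2 (by simp; omega))]
    simp only [Fin.ext_iff]
    split_ifs with hlast
    · rfl
    · exact Fin.val_add_one_of_lt' (by omega)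
  · rcases Nat.lt_or_ge x.val a with hxa | hax
    · exact Fin.cycleIcc_of_lt (Fin.lt_def.2 hxa)
    · exact Fin.cycleIcc_of_gt (Fin.lt_def.2 (by simp; omega))

lemma IsBlockPacking.exists_perm_isAdjCycle (hq : 1 ≤ q) (hS : IsBlockPacking q n S) :
    ∃ c : Perm (Fin n), (∀ a ∈ S, isAdjCycle q c a) ∧
      ∀ x : Fin n, x.val ∉ blockCover q S → c x = x := by
  induction S using Finset.induction_on with
  | empty => exact ⟨1, by simp, fun _ _ => rfl⟩
  | insert b S hb ih =>
    obtain ⟨c, hcS, hc⟩ := ih (hS.mono (subset_insert b S))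
    obtain ⟨r, hrb, hr⟩ := exists_isAdjCycle_of_add_le hq (hS.1 b (mem_insert_self b S))
    have hsep : ∀ a ∈ S, ∀ {y : ℕ}, a ≤ y ∧ y < a + q → ¬ (b ≤ y ∧ y < b + q) :=
      fun a ha y hya hyb => ne_of_mem_of_not_mem ha hb
        (hS.eq_of_mem_block (mem_insert_of_mem ha) (mem_insert_self b S) hya hyb)
    refine ⟨r * c, fun a ha => ⟨hS.1 a ha, fun x hax hxa => ?_⟩, fun x hx => ?_⟩
    · rcases mem_insert.1 ha with rfl | ha
      · have hxS : x.val ∉ blockCover q S := by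
          rw [mem_blockCover]
          rintro ⟨a', ha', hx'⟩
          exact hsep a' ha' hx' ⟨hax, hxa⟩
        rw [Perm.mul_apply, hc x hxS]
        exact hrb.2 x hax hxa
      · rw [Perm.mul_apply, hr _ (hsep a ha ((hcS a ha).apply_mem_block ⟨hax, hxa⟩))]
        exact (hcS a ha).2 x hax hxa
    · rw [mem_blockCover] at hx
      rw [Perm.mul_apply, hc x fun h => hx ?_, hr x fun h => hx ⟨b, mem_insert_self b S, h⟩]
      obtain ⟨a, ha, hxa⟩ := mem_blockCover.1 h
      exact ⟨a, mem_insert_of_mem ha, hxa⟩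

lemma forall_isAdjCycle_iff {c : Perm (Fin n)} (hc : ∀ a ∈ S, isAdjCycle q c a) :
    (∀ a ∈ S, isAdjCycle q π a) ↔
      ∀ x : Fin n, x.val ∈ blockCover q S → π x = c x := by
  constructor
  · intro hπ x hx
    obtain ⟨a, ha, hax, hxa⟩ := mem_blockCover.1 hx
    exact Fin.ext (((hπ a ha).2 x hax hxa).trans ((hc a ha).2 x hax hxa).symm)
  · intro hπ a ha
    refine ⟨(hc a ha).1, fun x hax hxa => ?_⟩
    rw [hπ x (mem_blockCover.2 ⟨a, ha, hax, hxa⟩)]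
    exact (hc a ha).2 x hax hxa

lemma card_fin_subtype_val_mem {s : Finset ℕ} (hs : s ⊆ range n) :
    Fintype.card {x : Fin n // x.val ∈ s} = #s := by
  rw [Fintype.card_subtype, ← card_attachFin s fun m hm => mem_range.1 (hs hm)]
  congr 1
  ext x
  simp

lemma IsBlockPacking.card_filter_forall_isAdjCycle (hq : 1 ≤ q) (hS : IsBlockPacking q n S) :
    #{π : Perm (Fin n) | ∀ a ∈ S, isAdjCycle q π a} = (n - q * #S)! := by
  obtain ⟨c, hc, -⟩ := hS.exists_perm_isAdjCycle hq
  let p : Fin n → Prop := fun x => x.val ∉ blockCover q S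
  -- `π ↦ c⁻¹ * π` identifies these permutations with those fixing every covered point
  have e : {π : Perm (Fin n) // ∀ a ∈ S, isAdjCycle q π a} ≃
      {τ : Perm (Fin n) // ∀ x, ¬ p x → τ x = x} :=
    (Equiv.mulLeft c⁻¹).subtypeEquiv fun π => by
      simp [p, forall_isAdjCycle_iff hc, Equiv.symm_apply_eq]
  rw [← Fintype.card_subtype, Fintype.card_congr (e.trans (Perm.subtypeEquivSubtypePerm p).symm),
    Fintype.card_perm, Fintype.card_subtype_compl,
    card_fin_subtype_val_mem hS.blockCover_subset_range, Fintype.card_fin, hS.card_blockCover]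

lemma sum_choose_adjCycleCount (hq : 1 ≤ q) (t : ℕ) :
    ∑ π : Perm (Fin n), (adjCycleCount q π).choose t =
      #(blockPackings q n t) * (n - q * t)! := by
  let r : Perm (Fin n) → Finset ℕ → Prop := fun π S => ∀ a ∈ S, isAdjCycle q π a
  have habove (π : Perm (Fin n)) :
      (powersetCard t (range n)).bipartiteAbove r π = powersetCard t (adjCycleStarts q π) := by
    ext S
    simp only [bipartiteAbove, r, adjCycleStarts, mem_filter, mem_powersetCard, subset_iff]
    grind
  have hpack : ∀ S ∈ powersetCard t (range n),
      #{π : Perm (Fin n) | r π S} ≠ 0 → IsBlockPacking q n S := by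
    intro S hS hne
    obtain ⟨π, hπ⟩ := card_ne_zero.1 hne
    refine (isBlockPacking_adjCycleStarts hq π).mono fun a ha => ?_
    exact mem_filter.2 ⟨(mem_powersetCard.1 hS).1 ha, (mem_filter.1 hπ).2 a ha⟩
  calc ∑ π : Perm (Fin n), (adjCycleCount q π).choose t
      = ∑ π : Perm (Fin n), #((powersetCard t (range n)).bipartiteAbove r π) := by
        simp_rw [habove, card_powersetCard]; rfl
    _ = ∑ S ∈ powersetCard t (range n), #{π : Perm (Fin n) | r π S} :=
        sum_card_bipartiteAbove_eq_sum_card_bipartiteBelow r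
    _ = ∑ S ∈ blockPackings q n t, #{π : Perm (Fin n) | r π S} :=
        (sum_filter_of_ne hpack).symm
    _ = #(blockPackings q n t) * (n - q * t)! := by
        refine sum_const_nat fun S hS => ?_
        obtain ⟨hcard, hS⟩ := (mem_blockPackings hq).1 hS
        rw [hS.card_filter_forall_isAdjCycle hq, hcard]

lemma sum_choose_mul_numAqC (hq : 1 ≤ q) (t : ℕ) :
    ∑ i ∈ Icc t (n / q), i.choose t * numAqC q n i =
      ∑ π : Perm (Fin n), (adjCycleCount q π).choose t := by
  calc ∑ i ∈ Icc t (n / q), i.choose t * numAqC q n i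
      = ∑ i ∈ range (n / q + 1), i.choose t * numAqC q n i := by
        refine sum_subset (fun i hi => mem_range.2 (by simp at hi; omega)) fun i hi hi' => ?_
        rw [mem_range] at hi
        rw [mem_Icc] at hi'
        rw [Nat.choose_eq_zero_of_lt (by omega), zero_mul]
    _ = ∑ i ∈ range (n / q + 1),
          ∑ π with adjCycleCount q π = i, (adjCycleCount q π).choose t := by
        refine sum_congr rfl fun i _ => ?_
        rw [sum_const_nat fun π hπ => by rw [(mem_filter.1 hπ).2], mul_comm]
        rfl
    _ = ∑ π : Perm (Fin n), (adjCycleCount q π).choose t :=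
        sum_fiberwise_of_maps_to
          (fun π _ => mem_range.2 (Nat.lt_succ_of_le (adjCycleCount_le_div hq π))) _

end Permutations

theorem stmt1_general (n q t : ℕ) (hq : 1 ≤ q) (ht : t ≤ n / q) :
    (∑ i ∈ Finset.Icc t (n / q), (i.choose t) * (numAqC q n i) : ℚ) =
      ((n - (q - 1) * t).factorial : ℚ) / (t.factorial : ℚ) := by
  have hqt : q * t ≤ n := by rw [mul_comm]; exact (Nat.le_div_iff_mul_le hq).1 ht
  have htq : t ≤ q * t := Nat.le_mul_of_pos_left t hq
  have hsub : (q - 1) * t = q * t - t := Nat.sub_one_mul q t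
  have htm : t ≤ n - (q - 1) * t := by omega
  have hrest : n - (q - 1) * t - t = n - q * t := by omega
  calc (∑ i ∈ Finset.Icc t (n / q), (i.choose t) * (numAqC q n i) : ℚ)
      = ((∑ i ∈ Icc t (n / q), i.choose t * numAqC q n i : ℕ) : ℚ) := by push_cast; rfl
    _ = ((n - (q - 1) * t).choose t * (n - (q - 1) * t - t)! : ℕ) := by
        rw [sum_choose_mul_numAqC hq, sum_choose_adjCycleCount hq, card_blockPackings hq, hrest]
    _ = ((n - (q - 1) * t).factorial : ℚ) / (t.factorial : ℚ) := by
        push_cast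
        rw [Nat.cast_choose ℚ htm]
        field_simp

theorem stmt1 (n q t : ℕ) (hq : 1 ≤ q) (hqn : q ≤ n) (ht : t ≤ n / q) :
    (∑ i ∈ Finset.Icc t (n / q), (i.choose t) * (numAqC q n i) : ℚ) =
      ((n - (q - 1) * t).factorial : ℚ) / (t.factorial : ℚ) :=
  stmt1_general n q t hq ht
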